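/- For the polynomial map H = (0, x₁², x₁³, 3x₂x₁² − 2x₃x₁) in dimension 4 over ℚ, the Jacobian JH satisfies (JH)² = 0 (nilpotency index two), but the strong nilpotency index of JH equals 3; in particular (JH)|_{x=y}·(JH)|_{x=z} ≠ 0 for fresh indeterminate tuples y, z, while (JH)|_{x=w}·(JH)|_{x=y}·(JH)|_{x=z} = 0. -/

import Mathlib

open MvPolynomial

/-- Substitute the `i`-th fresh tuple of indeterminates for `x` in every entry of `M`. -/
noncomputable def substN {K : Type} [CommRing K] {n m : ℕ}
    (M : Matrix (Fin m) (Fin m) (MvPolynomial (Fin n) K)) (i : ℕ) :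
    Matrix (Fin m) (Fin m) (MvPolynomial (ℕ × Fin n) K) :=
  M.map (rename fun k => (i, k))

/-- The Jacobian matrix `(∂H_i/∂x_j)` of a polynomial map `H`. -/
noncomputable def jac {K : Type} [CommRing K] {n : ℕ}
    (H : Fin n → MvPolynomial (Fin n) K) :
    Matrix (Fin n) (Fin n) (MvPolynomial (Fin n) K) :=
  Matrix.of fun i j => pderiv j (H i)

/-- The map `H = (0, x₁², x₁³, 3x₂x₁² − 2x₃x₁)` in dimension 4 over ℚ. -/
noncomputable def H8 : Fin 4 → MvPolynomial (Fin 4) ℚ :=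
  ![0, X 0 ^ 2, X 0 ^ 3, 3 * X 1 * X 0 ^ 2 - 2 * X 2 * X 0]

/-!
Every specialisation of `JH` has the same shape: rows 1 and 2 live in column 0
and row 0 vanishes. Hence a product of two specialisations is concentrated in the entry `(3, 0)`,
where it equals `6 a a' (a - a')`, and multiplying that by a third specialisation kills it, since
row 0 of the latter vanishes. The entry `6 a a' (a - a')` is `0` for `a = a'`, giving `(JH)² = 0`,
but not for two distinct indeterminates `a = y₁`, `a' = z₁`.
-/

theorem Matrix.single_eq_zero_iff {m n α : Type*} [DecidableEq m] [DecidableEq n] [Zero α]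
    {i : m} {j : n} {c : α} : Matrix.single i j c = 0 ↔ c = 0 :=
  ⟨fun h => by simpa using congrFun (congrFun h i) j, fun h => h ▸ Matrix.single_zero i j⟩

theorem pderiv_ofNat {σ R : Type*} [CommSemiring R] (i : σ) (n : ℕ) [n.AtLeastTwo] :
    pderiv i (ofNat(n) : MvPolynomial σ R) = 0 := by
  rw [← Nat.cast_ofNat]
  exact Derivation.map_natCast _ n

section JacobianShape

variable {R : Type*} [CommRing R]

/-- `JH` evaluated at a point with first three coordinates `a, b, c`. -/
def jacH8At (a b c : R) : Matrix (Fin 4) (Fin 4) R :=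
  !![0, 0, 0, 0;
     2 * a, 0, 0, 0;
     3 * a ^ 2, 0, 0, 0;
     6 * b * a - 2 * c, 3 * a ^ 2, -2 * a, 0]

theorem map_jacH8At {S : Type*} [CommRing S] (f : R →+* S) (a b c : R) :
    (jacH8At a b c).map f = jacH8At (f a) (f b) (f c) := by
  ext i j
  fin_cases i <;> fin_cases j <;> simp [jacH8At, map_ofNat]

theorem jacH8At_mul_jacH8At (a b c a' b' c' : R) :
    jacH8At a b c * jacH8At a' b' c' = Matrix.single 3 0 (6 * a * a' * (a - a')) := by
  ext i j
  fin_cases i <;> fin_cases j <;>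
    simp [jacH8At, Matrix.mul_apply, Fin.sum_univ_four]
  ring

theorem single_mul_jacH8At (i : Fin 4) (r a b c : R) :
    Matrix.single i 0 r * jacH8At a b c = 0 := by
  ext k j
  by_cases hk : k = i
  · subst hk
    fin_cases j <;> simp [jacH8At]
  · exact Matrix.single_mul_apply_of_ne _ _ _ _ _ hk _

end JacobianShape

theorem jac_H8 : jac H8 = jacH8At (X 0) (X 1) (X 2) := by
  ext i j : 1
  fin_cases i <;> fin_cases j <;>
    simp [jac, H8, jacH8At, pderiv_X, pderiv_ofNat] <;> ring

theorem substN_jac_H8 (i : ℕ) :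
    substN (jac H8) i = jacH8At (X (i, 0)) (X (i, 1)) (X (i, 2)) := by
  rw [substN, jac_H8, ← RingHom.coe_coe (rename _), map_jacH8At]
  simp

theorem stmt8 :
    jac H8 * jac H8 = 0 ∧
    substN (jac H8) 1 * substN (jac H8) 0 ≠ 0 ∧
    substN (jac H8) 2 * substN (jac H8) 1 * substN (jac H8) 0 = 0 := by
  refine ⟨?_, ?_, ?_⟩
  · rw [jac_H8, jacH8At_mul_jacH8At, sub_self, mul_zero, Matrix.single_zero]
  · rw [substN_jac_H8, substN_jac_H8, jacH8At_mul_jacH8At, Ne, Matrix.single_eq_zero_iff]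
    simp [X_ne_zero, sub_eq_zero]
  · simp only [substN_jac_H8, jacH8At_mul_jacH8At, single_mul_jacH8At]
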